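/- There exists a topological space that is F-Y countably domain representable but not F-Y π-domain representable (hence in particular F-Y countably π-domain representable but not F-Y domain representable). -/

import Mathlib

/-!
Conditions `A → Bool` with `A` countable, ordered by extension, represent `σ({0,1}^{ω₁})`
countably: a countable directed family of conditions is consistent, and its union is again a
condition.

In the ω₁-box topology countable intersections of open sets are open, so below the members of a
countable set `E` with a common point `x` lies a basic open set that prescribes `true` at a
coordinate where `x` is `false`. In a π-domain representation `(Q, ≪, B)` some `B q` lies inside
it, and `E ∪ {q}` closes up to a countable directed set forcing one more coordinate. Iterating
this `ω₁` times yields a directed set each of whose common points would need an uncountable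
support.
-/

open Set TopologicalSpace

universe u v

/-! ### The Banach–Mazur game -/

/-- Response of α's strategy `s` to β's moves `U 0, …, U n` in the Banach–Mazur game. -/
def bmResp {X : Type v} (s : ∀ n : ℕ, (Fin (n + 1) → Set X) → Set X)
    (U : ℕ → Set X) (n : ℕ) : Set X :=
  s n (fun i => U i)

/-- β's moves `U 0, …, U n` form a legal partial play against the strategy `s`:
each `U k` is a nonempty open set and `U (k+1)` is contained in α's previous response. -/
def bmLegal {X : Type v} [TopologicalSpace X]
    (s : ∀ n : ℕ, (Fin (n + 1) → Set X) → Set X) (U : ℕ → Set X) (n : ℕ) : Prop :=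
  (∀ k ≤ n, IsOpen (U k) ∧ (U k).Nonempty) ∧
  (∀ k, k + 1 ≤ n → U (k + 1) ⊆ bmResp s U k)

/-- `s` is a winning strategy for α in the Banach–Mazur game: to any legal partial play
it responds with a nonempty open subset of β's last move, and the intersection of its
responses along any infinite legal play is nonempty. -/
def IsBMWinning {X : Type v} [TopologicalSpace X]
    (s : ∀ n : ℕ, (Fin (n + 1) → Set X) → Set X) : Prop :=
  (∀ U n, bmLegal s U n →
      IsOpen (bmResp s U n) ∧ (bmResp s U n).Nonempty ∧ bmResp s U n ⊆ U n) ∧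
  (∀ U : ℕ → Set X, (∀ n, bmLegal s U n) → (⋂ n, bmResp s U n).Nonempty)

/-- A space is weakly α-favorable if α has a winning strategy in the Banach–Mazur game. -/
def WeaklyAlphaFavorable (X : Type v) [TopologicalSpace X] : Prop :=
  ∃ s : ∀ n : ℕ, (Fin (n + 1) → Set X) → Set X, IsBMWinning s

/-! ### The strong Choquet game -/

/-- Response of α's strategy `s` to β's moves `(x 0, U 0), …, (x n, U n)`. -/
def scResp {X : Type v} (s : ∀ n : ℕ, (Fin (n + 1) → X × Set X) → Set X)
    (p : ℕ → X × Set X) (n : ℕ) : Set X :=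
  s n (fun i => p i)

/-- β's moves `(x k, U k)` for `k ≤ n` form a legal partial play of the strong Choquet game
against `s`: each `U k` is open with `x k ∈ U k`, and `U (k+1)` is contained in α's previous
response. -/
def scLegal {X : Type v} [TopologicalSpace X]
    (s : ∀ n : ℕ, (Fin (n + 1) → X × Set X) → Set X) (p : ℕ → X × Set X) (n : ℕ) : Prop :=
  (∀ k ≤ n, IsOpen (p k).2 ∧ (p k).1 ∈ (p k).2) ∧
  (∀ k, k + 1 ≤ n → (p (k + 1)).2 ⊆ scResp s p k)

/-- `s` is a winning strategy for α in the strong Choquet game. -/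
def IsSCWinning {X : Type v} [TopologicalSpace X]
    (s : ∀ n : ℕ, (Fin (n + 1) → X × Set X) → Set X) : Prop :=
  (∀ p n, scLegal s p n →
      IsOpen (scResp s p n) ∧ (p n).1 ∈ scResp s p n ∧ scResp s p n ⊆ (p n).2) ∧
  (∀ p : ℕ → X × Set X, (∀ n, scLegal s p n) → (⋂ n, scResp s p n).Nonempty)

/-- A space is Choquet complete if α has a winning strategy in the strong Choquet game. -/
def ChoquetComplete (X : Type v) [TopologicalSpace X] : Prop :=
  ∃ s : ∀ n : ℕ, (Fin (n + 1) → X × Set X) → Set X, IsSCWinning s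

/-! ### Fleissner–Yengulalp domain representability -/

/-- X is F-Y countably π-domain representable: there is a triple `(Q, ≪, B)` where
`B` maps `Q` to nonempty open sets forming a π-base, `≪` is transitive, `p ≪ q`
implies `B p ⊇ B q`, any two elements whose `B`-values meet have a common upper bound,
and every countable upward directed `D ⊆ Q` has `⋂ {B q : q ∈ D} ≠ ∅`. -/
def FYCountablyPiDomainRep (X : Type v) [TopologicalSpace X] : Prop :=
  ∃ (Q : Type u) (r : Q → Q → Prop) (B : Q → Set X),
    (∀ q, IsOpen (B q) ∧ (B q).Nonempty) ∧
    (∀ U : Set X, IsOpen U → U.Nonempty → ∃ q, B q ⊆ U) ∧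
    Transitive r ∧
    (∀ p q, r p q → B q ⊆ B p) ∧
    (∀ p q, (B p ∩ B q).Nonempty → ∃ t, r p t ∧ r q t) ∧
    (∀ D : Set Q, D.Nonempty → D.Countable → DirectedOn r D → (⋂ q ∈ D, B q).Nonempty)

/-- X is F-Y π-domain representable (the intersection condition holds for all upward
directed subsets, of arbitrary cardinality). -/
def FYPiDomainRep (X : Type v) [TopologicalSpace X] : Prop :=
  ∃ (Q : Type u) (r : Q → Q → Prop) (B : Q → Set X),
    (∀ q, IsOpen (B q) ∧ (B q).Nonempty) ∧
    (∀ U : Set X, IsOpen U → U.Nonempty → ∃ q, B q ⊆ U) ∧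
    Transitive r ∧
    (∀ p q, r p q → B q ⊆ B p) ∧
    (∀ p q, (B p ∩ B q).Nonempty → ∃ t, r p t ∧ r q t) ∧
    (∀ D : Set Q, D.Nonempty → DirectedOn r D → (⋂ q ∈ D, B q).Nonempty)

/-- X is F-Y countably domain representable: there is a triple `(Q, ≪, B)` where
`B` maps `Q` to nonempty open sets forming a base, `≪` is transitive, `p ≪ q`
implies `B p ⊇ B q`, for every point `x` the set `{q : x ∈ B q}` is upward directed,
and every countable upward directed `D ⊆ Q` has `⋂ {B q : q ∈ D} ≠ ∅`. -/
def FYCountablyDomainRep (X : Type v) [TopologicalSpace X] : Prop :=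
  ∃ (Q : Type u) (r : Q → Q → Prop) (B : Q → Set X),
    (∀ q, IsOpen (B q) ∧ (B q).Nonempty) ∧
    (∀ U : Set X, IsOpen U → ∀ x ∈ U, ∃ q, x ∈ B q ∧ B q ⊆ U) ∧
    Transitive r ∧
    (∀ p q, r p q → B q ⊆ B p) ∧
    (∀ x : X, DirectedOn r {q | x ∈ B q}) ∧
    (∀ D : Set Q, D.Nonempty → D.Countable → DirectedOn r D → (⋂ q ∈ D, B q).Nonempty)

/-- X is F-Y domain representable (the intersection condition holds for all upward
directed subsets, of arbitrary cardinality). -/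
def FYDomainRep (X : Type v) [TopologicalSpace X] : Prop :=
  ∃ (Q : Type u) (r : Q → Q → Prop) (B : Q → Set X),
    (∀ q, IsOpen (B q) ∧ (B q).Nonempty) ∧
    (∀ U : Set X, IsOpen U → ∀ x ∈ U, ∃ q, x ∈ B q ∧ B q ⊆ U) ∧
    Transitive r ∧
    (∀ p q, r p q → B q ⊆ B p) ∧
    (∀ x : X, DirectedOn r {q | x ∈ B q}) ∧
    (∀ D : Set Q, D.Nonempty → DirectedOn r D → (⋂ q ∈ D, B q).Nonempty)

/-! ### The space σ({0,1}^{ω₁}) with the ω₁-box topology -/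

/-- The σ-product of the Cantor cube over `I`: points with countable support. -/
def Sigma01 (I : Type v) : Type v := {x : I → Bool // {a | x a = true}.Countable}

/-- The basic set `pr_A⁻¹(f↾A)`: points of the σ-product agreeing with `f` on `A`. -/
def basicSet (I : Type v) (A : Set I) (f : I → Bool) : Set (Sigma01 I) :=
  {y | ∀ a ∈ A, y.1 a = f a}

/-- The ω₁-box topology on the σ-product, generated by the sets `pr_A⁻¹(f↾A)`
for countable `A`. -/
instance Sigma01.topologicalSpace (I : Type v) : TopologicalSpace (Sigma01 I) :=
  TopologicalSpace.generateFrom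
    {U | ∃ (A : Set I) (f : I → Bool), A.Countable ∧ U = basicSet I A f}

open Cardinal

namespace Sigma01

variable {I : Type v}

instance : Inhabited (Sigma01 I) := ⟨⟨fun _ => false, by simp⟩⟩

theorem isOpen_basicSet {A : Set I} (hA : A.Countable) (f : I → Bool) :
    IsOpen (basicSet I A f) :=
  isOpen_generateFrom_of_mem ⟨A, f, hA, rfl⟩

theorem mem_basicSet_self (A : Set I) (x : Sigma01 I) : x ∈ basicSet I A x.1 :=
  fun _ _ => rfl

theorem basicSet_nonempty {A : Set I} (hA : A.Countable) (f : I → Bool) :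
    (basicSet I A f).Nonempty := by
  classical
  refine ⟨⟨fun a => decide (a ∈ A ∧ f a = true), hA.mono fun a ha => (decide_eq_true_iff.1 ha).1⟩,
    fun a ha => ?_⟩
  cases h : f a <;> simp [ha, h]

theorem isTopologicalBasis_basicSet :
    IsTopologicalBasis
      {U : Set (Sigma01 I) | ∃ (A : Set I) (f : I → Bool), A.Countable ∧ U = basicSet I A f} := by
  refine ⟨?_, ?_, rfl⟩
  · rintro _ ⟨A, f, hA, rfl⟩ _ ⟨A', f', hA', rfl⟩ x ⟨hxA, hxA'⟩
    refine ⟨basicSet I (A ∪ A') x.1, ⟨_, _, hA.union hA', rfl⟩, mem_basicSet_self _ x,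
      fun y hy => ⟨fun a ha => ?_, fun a ha => ?_⟩⟩
    · rw [hy a (.inl ha), hxA a ha]
    · rw [hy a (.inr ha), hxA' a ha]
  · exact sUnion_eq_univ_iff.2 fun x => ⟨_, ⟨∅, x.1, countable_empty, rfl⟩, mem_basicSet_self _ x⟩

theorem exists_basicSet_subset {U : Set (Sigma01 I)} (hU : IsOpen U) {x : Sigma01 I}
    (hx : x ∈ U) : ∃ A : Set I, A.Countable ∧ basicSet I A x.1 ⊆ U := by
  obtain ⟨_, ⟨A, f, hA, rfl⟩, hxV, hVU⟩ :=
    isTopologicalBasis_basicSet.exists_subset_of_mem_open hx hU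
  exact ⟨A, hA, fun y hy => hVU fun a ha => (hy a ha).trans (hxV a ha)⟩

/-- The ω₁-box topology makes `Sigma01 I` a P-space. -/
theorem exists_basicSet_subset_biInter {κ : Type*} {S : Set κ} (hS : S.Countable)
    {U : κ → Set (Sigma01 I)} (hU : ∀ k ∈ S, IsOpen (U k)) {x : Sigma01 I}
    (hx : x ∈ ⋂ k ∈ S, U k) : ∃ A : Set I, A.Countable ∧ basicSet I A x.1 ⊆ ⋂ k ∈ S, U k := by
  rw [mem_iInter₂] at hx
  choose A hA hAU using fun (k : S) => exists_basicSet_subset (hU k k.2) (hx k k.2)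
  have := hS.to_subtype
  refine ⟨⋃ k : S, A k, countable_iUnion hA, subset_iInter₂ fun k hk y hy => hAU ⟨k, hk⟩ ?_⟩
  exact fun a ha => hy a (mem_iUnion.2 ⟨⟨k, hk⟩, ha⟩)

end Sigma01

/-- A countable partial function `dom → Bool`; the values of `val` off `dom` are ignored. -/
structure CountableCondition (I : Type v) where
  dom : Set I
  countable_dom : dom.Countable
  val : I → Bool

namespace CountableCondition

variable {I : Type v}

instance : Preorder (CountableCondition I) where
  le p q := p.dom ⊆ q.dom ∧ ∀ a ∈ p.dom, q.val a = p.val a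
  le_refl _ := ⟨subset_rfl, fun _ _ => rfl⟩
  le_trans _ _ _ hpq hqt := ⟨hpq.1.trans hqt.1, fun a ha => (hqt.2 a (hpq.1 ha)).trans (hpq.2 a ha)⟩

def toSet (p : CountableCondition I) : Set (Sigma01 I) := basicSet I p.dom p.val

theorem toSet_anti {p q : CountableCondition I} (h : p ≤ q) : q.toSet ⊆ p.toSet :=
  fun _ hy a ha => (hy a (h.1 ha)).trans (h.2 a ha)

theorem nonempty_biInter_toSet {D : Set (CountableCondition I)} (hD : D.Countable)
    (hdir : DirectedOn (· ≤ ·) D) : (⋂ p ∈ D, p.toSet).Nonempty := by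
  classical
  let z : I → Bool := fun a => decide (∃ p ∈ D, a ∈ p.dom ∧ p.val a = true)
  have hz : {a | z a = true}.Countable := (hD.biUnion fun p _ => p.countable_dom).mono
    fun a ha => by
      obtain ⟨p, hp, ha, -⟩ := decide_eq_true_iff.1 ha
      exact mem_biUnion hp ha
  refine ⟨⟨z, hz⟩, mem_iInter₂.2 fun p hp a ha => ?_⟩
  cases hpa : p.val a
  · refine decide_eq_false fun ⟨q, hq, haq, hqa⟩ => ?_
    obtain ⟨t, -, hpt, hqt⟩ := hdir p hp q hq
    rw [← hqt.2 a haq, hpt.2 a ha, hpa] at hqa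
    exact Bool.false_ne_true hqa
  · exact decide_eq_true ⟨p, hp, ha, hpa⟩

end CountableCondition

theorem fyCountablyDomainRep_sigma01 (I : Type v) : FYCountablyDomainRep.{v} (Sigma01 I) := by
  refine ⟨CountableCondition I, (· ≤ ·), CountableCondition.toSet,
    fun p => ⟨Sigma01.isOpen_basicSet p.countable_dom p.val,
      Sigma01.basicSet_nonempty p.countable_dom p.val⟩,
    fun U hU x hx => ?_, fun _ _ _ => le_trans, fun _ _ => CountableCondition.toSet_anti,
    fun x p hp q hq => ?_, fun D _ hD hdir => CountableCondition.nonempty_biInter_toSet hD hdir⟩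
  · obtain ⟨A, hA, hAU⟩ := Sigma01.exists_basicSet_subset hU hx
    exact ⟨⟨A, hA, x.1⟩, Sigma01.mem_basicSet_self A x, hAU⟩
  · exact ⟨⟨p.dom ∪ q.dom, p.countable_dom.union q.countable_dom, x.1⟩,
      Sigma01.mem_basicSet_self _ x, ⟨subset_union_left, hp⟩, ⟨subset_union_right, hq⟩⟩

theorem exists_subset_of_forall_mem_subset {X Q : Type*} [TopologicalSpace X] {B : Q → Set X}
    (h : ∀ U : Set X, IsOpen U → ∀ x ∈ U, ∃ q, x ∈ B q ∧ B q ⊆ U) :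
    ∀ U : Set X, IsOpen U → U.Nonempty → ∃ q, B q ⊆ U :=
  fun U hU ⟨x, hx⟩ => (h U hU x hx).imp fun _ => And.right

theorem exists_upper_of_directedOn_mem {X Q : Type*} {r : Q → Q → Prop} {B : Q → Set X}
    (h : ∀ x : X, DirectedOn r {q | x ∈ B q}) :
    ∀ p q, (B p ∩ B q).Nonempty → ∃ t, r p t ∧ r q t :=
  fun p q ⟨x, hp, hq⟩ => (h x p hp q hq).imp fun _ => And.right

section Implications

variable {X : Type v} [TopologicalSpace X]

theorem FYCountablyDomainRep.fyCountablyPiDomainRep (h : FYCountablyDomainRep.{u} X) :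
    FYCountablyPiDomainRep.{u} X :=
  let ⟨Q, r, B, hB, hbase, htr, hanti, hdir, hint⟩ := h
  ⟨Q, r, B, hB, exists_subset_of_forall_mem_subset hbase, htr, hanti,
    exists_upper_of_directedOn_mem hdir, hint⟩

theorem FYDomainRep.fyPiDomainRep (h : FYDomainRep.{u} X) : FYPiDomainRep.{u} X :=
  let ⟨Q, r, B, hB, hbase, htr, hanti, hdir, hint⟩ := h
  ⟨Q, r, B, hB, exists_subset_of_forall_mem_subset hbase, htr, hanti,
    exists_upper_of_directedOn_mem hdir, hint⟩

end Implications

theorem exists_countable_directedOn_insert {X Q : Type*} {r : Q → Q → Prop} {B : Q → Set X}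
    (htr : Transitive r) (hanti : ∀ p q, r p q → B q ⊆ B p) (hne : ∀ q, (B q).Nonempty)
    (hpair : ∀ p q, (B p ∩ B q).Nonempty → ∃ t, r p t ∧ r q t)
    {E : Set Q} (hE : E.Countable) {q₀ : Q} (hq₀ : ∀ p ∈ E, B q₀ ⊆ B p) :
    ∃ D, insert q₀ E ⊆ D ∧ D.Countable ∧ DirectedOn r D := by
  have : IsTrans Q r := ⟨htr⟩
  obtain ⟨p, hp⟩ := (hE.insert q₀).exists_eq_range (insert_nonempty q₀ E)
  have hins : ∀ p ∈ insert q₀ E, B q₀ ⊆ B p := forall_mem_insert.2 ⟨subset_rfl, hq₀⟩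
  have hp₀ : ∀ n, B q₀ ⊆ B (p n) := fun n => hins (p n) (hp ▸ mem_range_self n)
  -- Upper bounds of elements below `q₀` stay below `q₀`, so they keep meeting every `B (p n)`.
  have hnext : ∀ (q : {q // B q ⊆ B q₀}) (n : ℕ), ∃ t : {q // B q ⊆ B q₀}, r q t ∧ r (p n) t := by
    rintro ⟨q, hq⟩ n
    obtain ⟨t, hqt, hpt⟩ := hpair q (p n) (by rw [inter_eq_left.2 (hq.trans (hp₀ n))]; exact hne q)
    exact ⟨⟨t, (hanti _ _ hqt).trans hq⟩, hqt, hpt⟩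
  choose next hnext_q hnext_p using hnext
  let s : ℕ → Q := fun n => (Nat.rec ⟨q₀, subset_rfl⟩ (fun n q => next q n) n : {q // B q ⊆ B q₀})
  have hs : ∀ m n, m < n → r (s m) (s n) :=
    Nat.rel_of_forall_rel_succ_of_lt r (f := s) fun n => hnext_q _ n
  have hps : ∀ m n, m < n → r (p m) (s n) := by
    intro m n hmn
    rcases (Nat.succ_le_of_lt hmn).eq_or_lt with rfl | h
    · exact hnext_p _ m
    · exact htr (hnext_p _ m) (hs _ _ h)
  have hbound : ∀ a ∈ range p ∪ range s, ∃ m, ∀ n, m < n → r a (s n) := by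
    rintro _ (⟨m, rfl⟩ | ⟨m, rfl⟩)
    exacts [⟨m, hps m⟩, ⟨m, hs m⟩]
  refine ⟨range p ∪ range s, hp.le.trans subset_union_left,
    (countable_range p).union (countable_range s), fun a ha b hb => ?_⟩
  obtain ⟨m, hm⟩ := hbound a ha
  obtain ⟨k, hk⟩ := hbound b hb
  exact ⟨s (max m k + 1), .inr ⟨max m k + 1, rfl⟩, hm (max m k + 1) (by omega),
    hk (max m k + 1) (by omega)⟩

instance : Uncountable (ℵ₁ : Cardinal.{0}).ord.ToType := by
  rw [← aleph0_lt_mk_iff, mk_toType, card_ord]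
  exact aleph0_lt_aleph_one

theorem countable_Iio_toType_ord_aleph_one (i : (ℵ₁ : Cardinal.{0}).ord.ToType) :
    (Iio i).Countable :=
  le_aleph0_iff_set_countable.1 (lt_aleph_one_iff.1 (by simpa using mk_Iio_lt i))

theorem exists_directedOn_not_countable {Q I : Type*} {r : Q → Q → Prop} {φ : Set Q → Set I}
    (hφ : Monotone φ)
    (hstep : ∀ E : Set Q, E.Countable → DirectedOn r E →
      ∃ D, E ⊆ D ∧ D.Countable ∧ DirectedOn r D ∧ ¬ φ D ⊆ φ E) :
    ∃ D : Set Q, DirectedOn r D ∧ ¬ (φ D).Countable := by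
  have hext : ∀ E : Set Q, ∃ D, E ⊆ D ∧
      (E.Countable → DirectedOn r E → D.Countable ∧ DirectedOn r D ∧ ¬ φ D ⊆ φ E) := by
    intro E
    by_cases h : E.Countable ∧ DirectedOn r E
    · obtain ⟨D, hED, hD⟩ := hstep E h.1 h.2
      exact ⟨D, hED, fun _ _ => hD⟩
    · exact ⟨E, subset_rfl, fun h₁ h₂ => (h ⟨h₁, h₂⟩).elim⟩
  choose ext hext_sub hext using hext
  -- `F i = ext (⋃ j < i, F j)` for `i < ω₁`
  let F : (ℵ₁ : Cardinal.{0}).ord.ToType → Set Q :=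
    WellFoundedLT.fix fun i F => ext (⋃ j : Iio i, F j.1 j.2)
  let below i := ⋃ j : Iio i, F j.1
  have hF : ∀ i, F i = ext (below i) := WellFoundedLT.fix_eq _
  have hbelow : ∀ {i j}, j < i → F j ⊆ below i := fun h => subset_iUnion_of_subset ⟨_, h⟩ subset_rfl
  have hmono : Monotone F := monotone_iff_forall_lt.2 fun j i h =>
    (hbelow h).trans ((hF i).symm ▸ hext_sub _)
  have hgood : ∀ i, (F i).Countable ∧ DirectedOn r (F i) ∧ ¬ φ (F i) ⊆ φ (below i) := by
    intro i
    induction i using WellFoundedLT.induction with | ind i ih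
    have := (countable_Iio_toType_ord_aleph_one i).to_subtype
    rw [hF]
    exact hext _ (countable_iUnion fun j => (ih j j.2).1)
      (directedOn_iUnion (hmono.comp (Subtype.mono_coe _)).directed_le fun j => (ih j j.2).2.1)
  choose c hcF hcbelow using fun i => not_subset.1 (hgood i).2.2
  have hc : Function.Injective c := by
    intro i j hij
    by_contra hne
    rcases lt_or_gt_of_ne hne with h | h
    · exact hcbelow j (hij ▸ hφ (hbelow h) (hcF i))
    · exact hcbelow i (hij ▸ hφ (hbelow h) (hcF j))
  refine ⟨⋃ i, F i, directedOn_iUnion hmono.directed_le fun i => (hgood i).2.1, fun hD => ?_⟩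
  have hrange : range c ⊆ φ (⋃ i, F i) := range_subset_iff.2 fun i =>
    hφ (subset_iUnion F i) (hcF i)
  exact not_countable_univ (by simpa using (hD.mono hrange).preimage hc)

namespace Sigma01

variable {I : Type v} {Q : Type u}

def forcedTrue (B : Q → Set (Sigma01 I)) (D : Set Q) : Set I :=
  {a | ∀ y ∈ ⋂ q ∈ D, B q, y.1 a = true}

theorem forcedTrue_mono (B : Q → Set (Sigma01 I)) : Monotone (forcedTrue B) :=
  fun _ _ h _ ha y hy => ha y (biInter_subset_biInter_left h hy)

theorem countable_forcedTrue {B : Q → Set (Sigma01 I)} {D : Set Q}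
    (h : (⋂ q ∈ D, B q).Nonempty) : (forcedTrue B D).Countable :=
  let ⟨z, hz⟩ := h
  z.2.mono fun _ ha => ha z hz

/-- Below a countable family of open sets with common point `x` lies a basic open set that also
prescribes `true` at a fresh coordinate `a` with `x a = false`; a member of the π-base inside it
forces `a`. -/
theorem exists_countable_directedOn_forcedTrue [Uncountable I] {r : Q → Q → Prop}
    {B : Q → Set (Sigma01 I)} (hB : ∀ q, IsOpen (B q) ∧ (B q).Nonempty)
    (hpi : ∀ U : Set (Sigma01 I), IsOpen U → U.Nonempty → ∃ q, B q ⊆ U) (htr : Transitive r)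
    (hanti : ∀ p q, r p q → B q ⊆ B p) (hpair : ∀ p q, (B p ∩ B q).Nonempty → ∃ t, r p t ∧ r q t)
    {E : Set Q} (hE : E.Countable) {x : Sigma01 I} (hx : x ∈ ⋂ q ∈ E, B q) :
    ∃ D, E ⊆ D ∧ D.Countable ∧ DirectedOn r D ∧ ∃ a ∈ forcedTrue B D, x.1 a = false := by
  classical
  obtain ⟨A, hA, hAE⟩ := exists_basicSet_subset_biInter hE (fun q _ => (hB q).1) hx
  obtain ⟨a, ha⟩ : ∃ a, a ∉ A ∪ {b | x.1 b = true} :=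
    (ne_univ_iff_exists_notMem _).1 fun h => not_countable_univ (h ▸ hA.union x.2)
  let V := basicSet I (insert a A) (Function.update x.1 a true)
  have hVA : V ⊆ basicSet I A x.1 := fun y hy b hb =>
    (hy b (mem_insert_of_mem a hb)).trans
      (Function.update_of_ne (ne_of_mem_of_not_mem hb fun h => ha (Or.inl h)) _ _)
  obtain ⟨q₀, hq₀⟩ := hpi V (isOpen_basicSet (hA.insert a) _) (basicSet_nonempty (hA.insert a) _)
  obtain ⟨D, hED, hD, hdir⟩ := exists_countable_directedOn_insert htr hanti (fun q => (hB q).2)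
    hpair hE fun p hp => hq₀.trans (hVA.trans (hAE.trans (biInter_subset_of_mem hp)))
  refine ⟨D, (subset_insert q₀ E).trans hED, hD, hdir, a, fun y hy => ?_, ?_⟩
  · simpa using hq₀ (mem_iInter₂.1 hy q₀ (hED (mem_insert q₀ E))) a (mem_insert a A)
  · simpa using fun h => ha (Or.inr h)

theorem not_fyPiDomainRep [Uncountable I] : ¬ FYPiDomainRep.{u} (Sigma01 I) := by
  rintro ⟨Q, r, B, hB, hpi, htr, hanti, hpair, hint⟩
  have hint' : ∀ D : Set Q, DirectedOn r D → (⋂ q ∈ D, B q).Nonempty := fun D hdir =>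
    D.eq_empty_or_nonempty.elim (fun h => by simp [h]) (hint D · hdir)
  obtain ⟨D, hdir, hD⟩ := exists_directedOn_not_countable (forcedTrue_mono B)
    fun E hE hE_dir => by
      have hx := (hint' E hE_dir).some_mem
      obtain ⟨D, hED, hD, hD_dir, a, haD, hxa⟩ :=
        exists_countable_directedOn_forcedTrue hB hpi htr hanti hpair hE hx
      exact ⟨D, hED, hD, hD_dir, fun h => by simpa [hxa] using h haD _ hx⟩
  exact hD (countable_forcedTrue (hint' D hdir))

end Sigma01

/-- there is a space which is F-Y countably domain representable (hence
F-Y countably π-domain representable) but not F-Y π-domain representable (hence not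
F-Y domain representable). -/
theorem stmt13 :
    ∃ (X : Type) (_ : TopologicalSpace X),
      FYCountablyDomainRep.{0} X ∧ FYCountablyPiDomainRep.{0} X ∧
      ¬ FYPiDomainRep.{u} X ∧ ¬ FYDomainRep.{u} X :=
  have h := fyCountablyDomainRep_sigma01 (ℵ₁ : Cardinal.{0}).ord.ToType
  ⟨_, inferInstance, h, h.fyCountablyPiDomainRep, Sigma01.not_fyPiDomainRep,
    fun h' => Sigma01.not_fyPiDomainRep h'.fyPiDomainRep⟩
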